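/- Let G be a group and S an admissible family of subgroups. The set Ĝ_S of functions f : S → P(G) with f(H) ∈ H\G for all H ∈ S and f(K) ⊆ f(H) whenever K ⊆ H, equipped with the product (f·f')(H) = f(H) f'(H^f) where H^f = H^x for any x with f(H) = Hx, is a monoid with identity e(H) = H; moreover the map g ↦ ĝ, ĝ(H) = Hg, is a monoid homomorphism from G to Ĝ_S. -/
import Mathlib


open scoped Pointwise

variable {G : Type*} [Group G]

/-- The conjugate subgroup `H^x = x⁻¹ H x`. -/
def conjSub (x : G) (H : Subgroup G) : Subgroup G :=
  H.map (MulAut.conj x⁻¹).toMonoidHom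

/-- The completion `Ĝ_S`: functions assigning to each `H ∈ S` a right coset of `H`,
compatibly with inclusions. -/
def Ghat (S : Set (Subgroup G)) : Set ({H : Subgroup G // H ∈ S} → Set G) :=
  {f | (∀ H, ∃ x : G, f H = (H.1 : Set G) * {x}) ∧
       ∀ K H : {H : Subgroup G // H ∈ S}, K.1 ≤ H.1 → f K ⊆ f H}

/-- The product `(f·f')(H) = f(H) f'(H^f)`, written pointwise: an element of
`(f·f')(H)` is `x * y` with `x ∈ f(H)` and `y ∈ f'(H^x)` (note `H^x = H^f` for any
`x ∈ f(H)`). -/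
def GhatMul (S : Set (Subgroup G)) (hconj : ∀ H ∈ S, ∀ x : G, conjSub x H ∈ S)
    (f f' : {H : Subgroup G // H ∈ S} → Set G) :
    {H : Subgroup G // H ∈ S} → Set G :=
  fun H => {z : G | ∃ x ∈ f H, ∃ y ∈ f' ⟨conjSub x H.1, hconj H.1 H.2 x⟩, z = x * y}

/-- The identity element `e(H) = H`. -/
def GhatOne (S : Set (Subgroup G)) : {H : Subgroup G // H ∈ S} → Set G :=
  fun H => (H.1 : Set G)

/-- The natural map `g ↦ ĝ`, `ĝ(H) = Hg`. -/
def GhatOf (S : Set (Subgroup G)) (g : G) : {H : Subgroup G // H ∈ S} → Set G :=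
  fun H => (H.1 : Set G) * {g}

lemma mem_conjSub {H : Subgroup G} {x g : G} : g ∈ conjSub x H ↔ x * g * x⁻¹ ∈ H := by
  simp only [conjSub, Subgroup.mem_map, MulEquiv.coe_toMonoidHom, MulAut.conj_apply]
  constructor
  · rintro ⟨h, hh, rfl⟩
    have : x * (x⁻¹ * h * x⁻¹⁻¹) * x⁻¹ = h := by group
    rwa [this]
  · intro h
    exact ⟨_, h, by group⟩

lemma conjSub_mul (x y : G) (H : Subgroup G) :
    conjSub (x * y) H = conjSub y (conjSub x H) := by
  ext g
  simp only [mem_conjSub]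
  constructor <;> intro h
  · have : x * (y * g * y⁻¹) * x⁻¹ = x * y * g * (x * y)⁻¹ := by group
    rwa [this]
  · have : x * y * g * (x * y)⁻¹ = x * (y * g * y⁻¹) * x⁻¹ := by group
    rwa [this]

lemma conjSub_mono (x : G) {K H : Subgroup G} (h : K ≤ H) : conjSub x K ≤ conjSub x H :=
  fun g hg => mem_conjSub.2 (h (mem_conjSub.1 hg))

lemma conjSub_of_mem {H : Subgroup G} {x : G} (hx : x ∈ H) : conjSub x H = H := by
  ext g
  rw [mem_conjSub]
  constructor
  · intro h
    have := H.mul_mem (H.mul_mem (H.inv_mem hx) h) hx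
    have e : x⁻¹ * (x * g * x⁻¹) * x = g := by group
    rwa [e] at this
  · intro h
    exact H.mul_mem (H.mul_mem hx h) (H.inv_mem hx)

lemma mem_coset_iff {H : Subgroup G} {x z : G} :
    z ∈ (H : Set G) * {x} ↔ z * x⁻¹ ∈ H := by
  simp only [Set.mem_mul, Set.mem_singleton_iff]
  constructor
  · rintro ⟨a, ha, b, rfl, rfl⟩
    simpa using ha
  · intro h
    exact ⟨z * x⁻¹, h, x, rfl, by group⟩

lemma self_mem_coset {H : Subgroup G} (x : G) : x ∈ (H : Set G) * {x} :=
  mem_coset_iff.2 (by simpa using H.one_mem)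

lemma coset_eq_of_mem {H : Subgroup G} {x x' : G} (h : x' ∈ (H : Set G) * {x}) :
    (H : Set G) * {x'} = (H : Set G) * {x} := by
  rw [mem_coset_iff] at h
  ext z
  rw [mem_coset_iff, mem_coset_iff]
  constructor
  · intro hz
    have := H.mul_mem hz h
    have e : z * x'⁻¹ * (x' * x⁻¹) = z * x⁻¹ := by group
    rwa [e] at this
  · intro hz
    have := H.mul_mem hz (H.inv_mem h)
    have e : z * x⁻¹ * (x' * x⁻¹)⁻¹ = z * x'⁻¹ := by group
    rwa [e] at this

lemma conjSub_eq_of_mem_coset {H : Subgroup G} {x x' : G} (h : x' ∈ (H : Set G) * {x}) :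
    conjSub x' H = conjSub x H := by
  rw [mem_coset_iff] at h
  have : x' = (x' * x⁻¹) * x := by group
  rw [this, conjSub_mul, conjSub_of_mem h]

lemma coset_mul_coset {H : Subgroup G} (x y : G) :
    ((H : Set G) * {x}) * ((conjSub x H : Set G) * {y}) = (H : Set G) * {x * y} := by
  ext z
  simp only [Set.mem_mul, Set.mem_singleton_iff]
  constructor
  · rintro ⟨a, ⟨h, hh, b, hb, rfl⟩, c, ⟨k, hk, d, hd, rfl⟩, rfl⟩
    subst hb; subst hd
    rw [SetLike.mem_coe, mem_conjSub] at hk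
    exact ⟨h * (b * k * b⁻¹), H.mul_mem hh hk, b * d, rfl, by group⟩
  · rintro ⟨h, hh, b, rfl, rfl⟩
    exact ⟨h * x, ⟨h, hh, x, rfl, rfl⟩, y, ⟨1, (conjSub x H).one_mem, y, rfl, by group⟩, by group⟩
lemma GhatMul_eq {S : Set (Subgroup G)} (hconj : ∀ H ∈ S, ∀ x : G, conjSub x H ∈ S)
    (f f' : {H : Subgroup G // H ∈ S} → Set G)
    (H : {H : Subgroup G // H ∈ S}) (x : G) (hx : f H = (H.1 : Set G) * {x}) :
    GhatMul S hconj f f' H = f H * f' ⟨conjSub x H.1, hconj H.1 H.2 x⟩ := by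
  ext z
  simp only [GhatMul, Set.mem_setOf_eq, Set.mem_mul]
  constructor
  · rintro ⟨a, ha, y, hy, rfl⟩
    have hc : conjSub a H.1 = conjSub x H.1 := conjSub_eq_of_mem_coset (hx ▸ ha)
    have hs : (⟨conjSub a H.1, hconj H.1 H.2 a⟩ : {H : Subgroup G // H ∈ S}) =
        ⟨conjSub x H.1, hconj H.1 H.2 x⟩ := Subtype.ext hc
    exact ⟨a, ha, y, by rwa [hs] at hy, rfl⟩
  · rintro ⟨a, ha, y, hy, rfl⟩
    have hc : conjSub a H.1 = conjSub x H.1 := conjSub_eq_of_mem_coset (hx ▸ ha)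
    have hs : (⟨conjSub a H.1, hconj H.1 H.2 a⟩ : {H : Subgroup G // H ∈ S}) =
        ⟨conjSub x H.1, hconj H.1 H.2 x⟩ := Subtype.ext hc
    exact ⟨a, ha, y, by rwa [hs], rfl⟩


/-- For an admissible family `S`, the set `Ĝ_S` with the product
`(f·f')(H) = f(H) f'(H^f)` is a monoid with identity `e(H) = H`, the product is given by
the formula `(f·f')(H) = f(H) f'(H^x)` for any `x` with `f(H) = Hx`, and `g ↦ ĝ` is a
monoid homomorphism `G → Ĝ_S`. -/
theorem Ghat_monoid (S : Set (Subgroup G))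
    (hconj : ∀ H ∈ S, ∀ x : G, conjSub x H ∈ S)
    (hdir : ∀ T : Finset (Subgroup G), ↑T ⊆ S → ∃ K ∈ S, ∀ H ∈ T, K ≤ H) :
    (∀ f f', f ∈ Ghat S → f' ∈ Ghat S → GhatMul S hconj f f' ∈ Ghat S) ∧
    (∀ f f', f ∈ Ghat S → f' ∈ Ghat S →
      ∀ (H : {H : Subgroup G // H ∈ S}) (x : G), f H = (H.1 : Set G) * {x} →
        GhatMul S hconj f f' H = f H * f' ⟨conjSub x H.1, hconj H.1 H.2 x⟩) ∧
    (∀ f f' f'', f ∈ Ghat S → f' ∈ Ghat S → f'' ∈ Ghat S →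
      GhatMul S hconj (GhatMul S hconj f f') f'' = GhatMul S hconj f (GhatMul S hconj f' f'')) ∧
    GhatOne S ∈ Ghat S ∧
    (∀ f ∈ Ghat S, GhatMul S hconj (GhatOne S) f = f ∧ GhatMul S hconj f (GhatOne S) = f) ∧
    (∀ g : G, GhatOf S g ∈ Ghat S) ∧
    (∀ g g' : G, GhatOf S (g * g') = GhatMul S hconj (GhatOf S g) (GhatOf S g')) ∧
    GhatOf S 1 = GhatOne S := by
  refine ⟨?_, fun f f' _ _ H x hx => GhatMul_eq hconj f f' H x hx, ?_, ?_, ?_, ?_, ?_, ?_⟩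
  · -- closure
    intro f f' hf hf'
    constructor
    · intro H
      obtain ⟨x, hx⟩ := hf.1 H
      obtain ⟨y, hy⟩ := hf'.1 ⟨conjSub x H.1, hconj H.1 H.2 x⟩
      exact ⟨x * y, by rw [GhatMul_eq hconj f f' H x hx, hx, hy, coset_mul_coset]⟩
    · rintro K H hKH z ⟨a, ha, y, hy, rfl⟩
      refine ⟨a, hf.2 K H hKH ha, y, ?_, rfl⟩
      exact hf'.2 ⟨conjSub a K.1, hconj K.1 K.2 a⟩ ⟨conjSub a H.1, hconj H.1 H.2 a⟩
        (conjSub_mono a hKH) hy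
  · -- associativity
    intro f f' f'' _ _ _
    funext H
    ext z
    simp only [GhatMul, Set.mem_setOf_eq]
    constructor
    · rintro ⟨w, ⟨a, ha, b, hb, rfl⟩, c, hc, rfl⟩
      refine ⟨a, ha, b * c, ⟨b, hb, c, ?_, rfl⟩, mul_assoc a b c⟩
      have hs : (⟨conjSub (a * b) H.1, hconj H.1 H.2 (a * b)⟩ : {H : Subgroup G // H ∈ S}) =
          ⟨conjSub b (conjSub a H.1), hconj _ (hconj H.1 H.2 a) b⟩ :=
        Subtype.ext (conjSub_mul a b H.1)
      rwa [hs] at hc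
    · rintro ⟨a, ha, w, ⟨b, hb, c, hc, rfl⟩, rfl⟩
      refine ⟨a * b, ⟨a, ha, b, hb, rfl⟩, c, ?_, (mul_assoc a b c).symm⟩
      have hs : (⟨conjSub (a * b) H.1, hconj H.1 H.2 (a * b)⟩ : {H : Subgroup G // H ∈ S}) =
          ⟨conjSub b (conjSub a H.1), hconj _ (hconj H.1 H.2 a) b⟩ :=
        Subtype.ext (conjSub_mul a b H.1)
      rwa [hs]
  · -- identity in Ghat
    exact ⟨fun H => ⟨1, by simp [GhatOne]⟩, fun K H h => SetLike.coe_subset_coe.2 h⟩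
  · -- identity laws
    intro f hf
    constructor
    · funext H
      ext z
      simp only [GhatMul, GhatOne, Set.mem_setOf_eq]
      constructor
      · rintro ⟨a, ha, y, hy, rfl⟩
        have hs : (⟨conjSub a H.1, hconj H.1 H.2 a⟩ : {H : Subgroup G // H ∈ S}) = H :=
          Subtype.ext (conjSub_of_mem ha)
        rw [hs] at hy
        obtain ⟨x₀, hx₀⟩ := hf.1 H
        rw [hx₀] at hy ⊢
        rw [mem_coset_iff] at hy ⊢
        rw [mul_assoc]
        exact H.1.mul_mem ha hy
      · intro hz
        refine ⟨1, H.1.one_mem, z, ?_, (one_mul z).symm⟩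
        have hs : (⟨conjSub 1 H.1, hconj H.1 H.2 1⟩ : {H : Subgroup G // H ∈ S}) = H :=
          Subtype.ext (conjSub_of_mem H.1.one_mem)
        rwa [hs]
    · funext H
      ext z
      simp only [GhatMul, GhatOne, Set.mem_setOf_eq]
      constructor
      · rintro ⟨a, ha, y, hy, rfl⟩
        rw [SetLike.mem_coe, mem_conjSub] at hy
        obtain ⟨x₀, hx₀⟩ := hf.1 H
        rw [hx₀] at ha ⊢
        rw [mem_coset_iff] at ha ⊢
        have e : a * y * x₀⁻¹ = (a * y * a⁻¹) * (a * x₀⁻¹) := by group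
        rw [e]
        exact H.1.mul_mem hy ha
      · intro hz
        exact ⟨z, hz, 1, (conjSub z H.1).one_mem, (mul_one z).symm⟩
  · -- GhatOf mem
    intro g
    exact ⟨fun H => ⟨g, rfl⟩,
      fun K H h => Set.mul_subset_mul_right (SetLike.coe_subset_coe.2 h)⟩
  · -- multiplicative
    intro g g'
    funext H
    rw [GhatMul_eq hconj _ _ H g rfl]
    exact (coset_mul_coset g g').symm
  · funext H
    show (H.1 : Set G) * {1} = (H.1 : Set G)
    simp
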